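/- For n ≥ 1 and 1 ≤ i ≤ m ≤ n, define ψ_{m,i}(z) : Matₙ(ℂ)×ℂⁿ → Matₙ(ℂ)×ℂⁿ by ψ_{m,i}(z)(B,b) = (exp(zN)·B·exp(−zN), exp(zN)·b), where N = ι_m((B_{(m)})^{i−1}). Then for all indices 1 ≤ i ≤ m ≤ n, 1 ≤ i′ ≤ m′ ≤ n and all z, w ∈ ℂ, ψ_{m,i}(z) ∘ ψ_{m′,i′}(w) = ψ_{m′,i′}(w) ∘ ψ_{m,i}(z); moreover each ψ_{m,i}(z) maps V_n bijectively onto V_n. Consequently composing these flows defines an action of the abelian group ℂ^{n(n+1)/2} on Matₙ(ℂ)×ℂⁿ which preserves V_n (the Gelfand–Zeitlin action on V_n). -/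

import Mathlib

open Matrix

noncomputable section

/-- Upper-left `m × m` submatrix of an `n × n` matrix. -/
def ulMinor {n : ℕ} (m : ℕ) (hm : m ≤ n) (B : Matrix (Fin n) (Fin n) ℂ) :
    Matrix (Fin m) (Fin m) ℂ :=
  fun i j => B (Fin.castLE hm i) (Fin.castLE hm j)

/-- The embedding `ι_m` of `m × m` matrices into `n × n` matrices, placing the matrix in
the upper-left block and zeros elsewhere. -/
def iotaEmb {m : ℕ} (n : ℕ) (X : Matrix (Fin m) (Fin m) ℂ) : Matrix (Fin n) (Fin n) ℂ :=
  fun i j => if hi : (i : ℕ) < m then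
    (if hj : (j : ℕ) < m then X ⟨i, hi⟩ ⟨j, hj⟩ else 0) else 0

/-- The Gelfand–Zeitlin flow `φ_{m,i}(z)(B) = exp(z ι_m((B_(m))^(i-1))) B exp(-z ι_m((B_(m))^(i-1)))`. -/
def gzFlow {n : ℕ} (m i : ℕ) (hm : m ≤ n) (z : ℂ) (B : Matrix (Fin n) (Fin n) ℂ) :
    Matrix (Fin n) (Fin n) ℂ :=
  NormedSpace.exp (z • iotaEmb n ((ulMinor m hm B) ^ (i - 1))) * B *
    NormedSpace.exp ((-z) • iotaEmb n ((ulMinor m hm B) ^ (i - 1)))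


/-- The Krylov matrix of `(B, b)`, whose columns are `b, Bb, …, B^{n−1}b`. -/
def krylov {n : ℕ} (B : Matrix (Fin n) (Fin n) ℂ) (b : Fin n → ℂ) :
    Matrix (Fin n) (Fin n) ℂ :=
  fun i j => (B ^ (j : ℕ) *ᵥ b) i

/-- `b` is a cyclic vector for `B` if `b, Bb, …, B^{n−1}b` form a basis of `ℂⁿ`. -/
def IsCyclic' {n : ℕ} (B : Matrix (Fin n) (Fin n) ℂ) (b : Fin n → ℂ) : Prop :=
  IsUnit (krylov B b)

/-- `V_n`, the set of pairs `(B, b)` with `b` cyclic for `B`. -/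
def Vn (n : ℕ) : Set (Matrix (Fin n) (Fin n) ℂ × (Fin n → ℂ)) :=
  {p | IsCyclic' p.1 p.2}

/-- The Gelfand–Zeitlin flow `ψ_{m,i}(z)` on `Matₙ(ℂ) × ℂⁿ`. -/
def gzFlowV {n : ℕ} (m i : ℕ) (hm : m ≤ n) (z : ℂ)
    (p : Matrix (Fin n) (Fin n) ℂ × (Fin n → ℂ)) :
    Matrix (Fin n) (Fin n) ℂ × (Fin n → ℂ) :=
  (NormedSpace.exp (z • iotaEmb n ((ulMinor m hm p.1) ^ (i - 1))) * p.1 *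
      NormedSpace.exp ((-z) • iotaEmb n ((ulMinor m hm p.1) ^ (i - 1))),
   NormedSpace.exp (z • iotaEmb n ((ulMinor m hm p.1) ^ (i - 1))) *ᵥ p.2)

/-!
Each flow is a conjugation: `ψ_{m,i}(z)(B, b) = (g B g⁻¹, g b)` with `g = exp(z C^{i-1}) ⊕ 1` and
`C = B_(m)`, since the exponential of the corner embedding `ι_m X` is `exp X ⊕ 1`. Conjugation
multiplies the Krylov matrix by `g`, so `V_n` is preserved. As `exp(z C^{i-1})` commutes with `C`,
`ψ_{m,i}(z)` fixes `B_(m)` and hence every smaller minor; in particular `ψ_{m,i}(-z)` undoes it.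
For `m ≤ m'`, `ψ_{m,i}(z)` conjugates `B_(m')` by a block of `g`, and so conjugates the matrix `h`
defining `ψ_{m',i'}(w)` into `g h g⁻¹`; both composites are then conjugation by `g h`.
-/

open scoped Nat

theorem NormedSpace.exp_map_nonUnitalRingHom {A B : Type*} [NormedRing A] [NormedAlgebra ℚ A]
    [CompleteSpace A] [NormedRing B] [NormedAlgebra ℚ B] [CompleteSpace B]
    (f : A →ₙ+* B) (hf : Continuous f) (x : A) :
    NormedSpace.exp (f x) = f (NormedSpace.exp x) + (1 - f 1) := by
  have map_pow_succ (k : ℕ) : f (x ^ (k + 1)) = f x ^ (k + 1) := by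
    induction k with
    | zero => simp
    | succ k ih => rw [pow_succ, map_mul, ih, ← pow_succ]
  have hterm (k : ℕ) : (k !⁻¹ : ℚ) • f x ^ k =
      f ((k !⁻¹ : ℚ) • x ^ k) + if k = 0 then 1 - f 1 else 0 := by
    rcases k with _ | k
    · simp
    · simp [map_rat_smul, map_pow_succ]
  have hsum := ((NormedSpace.expSeries_summable' (𝕂 := ℚ) x).hasSum.map f.toAddMonoidHom
    hf).add (hasSum_ite_eq 0 (1 - f 1))
  simp only [NormedSpace.exp_eq_tsum_rat]
  exact (funext hterm ▸ hsum).tsum_eq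

namespace Matrix

variable {R 𝕜 : Type*} [CommRing R] [RCLike 𝕜] {l m n : Type*} [Fintype l] [Fintype m]
  [Fintype n] [DecidableEq l] [DecidableEq m] [DecidableEq n]

/-- When `J * Jᵀ = 1`, the rows of `J` span a copy of `m → R` inside `n → R` with complement
`ker J`; `cornerExtend J hJ P` acts as `P` on the former and as the identity on the latter. -/
def cornerExtend (J : Matrix m n R) (hJ : J * Jᵀ = 1) : Matrix m m R →* Matrix n n R where
  toFun P := Jᵀ * P * J + (1 - Jᵀ * J)
  map_one' := by simp
  map_mul' P Q := by
    have hJ' (Y : Matrix m n R) : J * (Jᵀ * Y) = Y := by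
      rw [← Matrix.mul_assoc, hJ, Matrix.one_mul]
    simp only [Matrix.add_mul, Matrix.mul_add, Matrix.sub_mul, Matrix.mul_sub, Matrix.mul_assoc,
      hJ', Matrix.mul_one, Matrix.one_mul]
    abel

theorem mul_cornerExtend {J : Matrix m n R} (hJ : J * Jᵀ = 1) (P : Matrix m m R) :
    J * cornerExtend J hJ P = P * J := by
  simp [cornerExtend, Matrix.mul_add, Matrix.mul_sub, ← Matrix.mul_assoc, hJ]

theorem cornerExtend_mul_transpose {J : Matrix m n R} (hJ : J * Jᵀ = 1) (P : Matrix m m R) :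
    cornerExtend J hJ P * Jᵀ = Jᵀ * P := by
  simp [cornerExtend, Matrix.add_mul, Matrix.sub_mul, Matrix.mul_assoc, hJ]

theorem mul_cornerExtend_mul_cornerExtend_mul_transpose {J : Matrix m n R} (hJ : J * Jᵀ = 1)
    (P Q : Matrix m m R) (B : Matrix n n R) :
    J * (cornerExtend J hJ P * B * cornerExtend J hJ Q) * Jᵀ = P * (J * B * Jᵀ) * Q := by
  rw [← Matrix.mul_assoc J, ← Matrix.mul_assoc J, mul_cornerExtend, Matrix.mul_assoc _ _ Jᵀ,
    cornerExtend_mul_transpose]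
  simp only [Matrix.mul_assoc]

theorem cornerExtend_cornerExtend {J₁ : Matrix l m R} {J₂ : Matrix m n R} {J : Matrix l n R}
    (hJ₁ : J₁ * J₁ᵀ = 1) (hJ₂ : J₂ * J₂ᵀ = 1) (hJ : J * Jᵀ = 1) (hJ₁₂ : J₁ * J₂ = J)
    (P : Matrix l l R) :
    cornerExtend J₂ hJ₂ (cornerExtend J₁ hJ₁ P) = cornerExtend J hJ P := by
  subst hJ₁₂
  simp only [cornerExtend, MonoidHom.coe_mk, OneHom.coe_mk, transpose_mul, Matrix.mul_add,
    Matrix.add_mul, Matrix.mul_sub, Matrix.sub_mul, Matrix.mul_assoc, Matrix.one_mul]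
  abel

open scoped Norms.Operator in
theorem exp_transpose_mul_mul {J : Matrix m n 𝕜} (hJ : J * Jᵀ = 1) (X : Matrix m m 𝕜) :
    NormedSpace.exp (Jᵀ * X * J) = cornerExtend J hJ (NormedSpace.exp X) := by
  let ι : Matrix m m 𝕜 →ₙ+* Matrix n n 𝕜 :=
    { toFun Y := Jᵀ * Y * J
      map_mul' Y Z := by
        simp only [Matrix.mul_assoc, ← Matrix.mul_assoc J Jᵀ, hJ, Matrix.one_mul]
      map_zero' := by simp
      map_add' Y Z := by simp [Matrix.mul_add, Matrix.add_mul] }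
  have hι : Continuous ι := (continuous_const.matrix_mul continuous_id).matrix_mul continuous_const
  refine (NormedSpace.exp_map_nonUnitalRingHom ι hι X).trans ?_
  change Jᵀ * NormedSpace.exp X * J + (1 - Jᵀ * (1 : Matrix m m 𝕜) * J) = _
  rw [Matrix.mul_one]
  rfl

end Matrix

section FinCorner

variable {l m n : ℕ}

def castLEMatrix (hm : m ≤ n) : Matrix (Fin m) (Fin n) ℂ :=
  (1 : Matrix (Fin n) (Fin n) ℂ).submatrix (Fin.castLE hm) id

theorem castLEMatrix_mul_transpose (hm : m ≤ n) :
    castLEMatrix hm * (castLEMatrix hm)ᵀ = 1 := by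
  ext i j
  simp [castLEMatrix, mul_apply, one_apply]

theorem castLEMatrix_mul_castLEMatrix (hl : l ≤ m) (hm : m ≤ n) :
    castLEMatrix hl * castLEMatrix hm = castLEMatrix (hl.trans hm) :=
  one_submatrix_mul (Fin.castLE hl) (Equiv.refl (Fin m)) _

theorem mul_castLEMatrix_apply {k : Type*} (hm : m ≤ n) (M : Matrix k (Fin m) ℂ) (i : k)
    (j : Fin n) : (M * castLEMatrix hm) i j = if hj : (j : ℕ) < m then M i ⟨j, hj⟩ else 0 := by
  split_ifs with hj
  · obtain ⟨j, rfl⟩ : ∃ j', Fin.castLE hm j' = j := ⟨⟨j, hj⟩, rfl⟩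
    simp [castLEMatrix, mul_apply, one_apply]
  · rw [mul_apply]
    refine Finset.sum_eq_zero fun k _ => ?_
    simp only [castLEMatrix, submatrix_apply, id, one_apply]
    rw [if_neg (fun h : Fin.castLE hm k = j => hj (h ▸ k.isLt)), mul_zero]

theorem ulMinor_eq_mul (hm : m ≤ n) (B : Matrix (Fin n) (Fin n) ℂ) :
    ulMinor m hm B = castLEMatrix hm * B * (castLEMatrix hm)ᵀ := by
  ext i j
  simp [ulMinor, castLEMatrix, mul_apply, one_apply]

theorem iotaEmb_eq_mul (hm : m ≤ n) (X : Matrix (Fin m) (Fin m) ℂ) :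
    iotaEmb n X = (castLEMatrix hm)ᵀ * X * castLEMatrix hm := by
  have hrow (i : Fin n) (j : Fin m) :
      ((castLEMatrix hm)ᵀ * X) i j = if hi : (i : ℕ) < m then X ⟨i, hi⟩ j else 0 := by
    rw [← transpose_transpose ((castLEMatrix hm)ᵀ * X), transpose_mul, transpose_transpose,
      transpose_apply, mul_castLEMatrix_apply]
    rfl
  ext i j
  rw [mul_castLEMatrix_apply]
  simp only [hrow, iotaEmb]
  split_ifs <;> rfl

/-- `P ↦ P ⊕ 1` for the splitting `ℂⁿ = ℂᵐ ⊕ ℂⁿ⁻ᵐ`. -/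
def upperLeftExtend (hm : m ≤ n) : Matrix (Fin m) (Fin m) ℂ →* Matrix (Fin n) (Fin n) ℂ :=
  cornerExtend (castLEMatrix hm) (castLEMatrix_mul_transpose hm)

theorem upperLeftExtend_upperLeftExtend (hl : l ≤ m) (hm : m ≤ n)
    (P : Matrix (Fin l) (Fin l) ℂ) :
    upperLeftExtend hm (upperLeftExtend hl P) = upperLeftExtend (hl.trans hm) P :=
  cornerExtend_cornerExtend _ _ _ (castLEMatrix_mul_castLEMatrix hl hm) P

theorem ulMinor_ulMinor (hl : l ≤ m) (hm : m ≤ n) (B : Matrix (Fin n) (Fin n) ℂ) :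
    ulMinor l hl (ulMinor m hm B) = ulMinor l (hl.trans hm) B :=
  rfl

theorem ulMinor_upperLeftExtend_mul_mul (hm : m ≤ n) (P Q : Matrix (Fin m) (Fin m) ℂ)
    (B : Matrix (Fin n) (Fin n) ℂ) :
    ulMinor m hm (upperLeftExtend hm P * B * upperLeftExtend hm Q) = P * ulMinor m hm B * Q := by
  simp only [ulMinor_eq_mul, upperLeftExtend, mul_cornerExtend_mul_cornerExtend_mul_transpose]

theorem exp_smul_iotaEmb (hm : m ≤ n) (z : ℂ) (X : Matrix (Fin m) (Fin m) ℂ) :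
    NormedSpace.exp (z • iotaEmb n X) = upperLeftExtend hm (NormedSpace.exp (z • X)) := by
  rw [iotaEmb_eq_mul hm, ← Matrix.smul_mul, ← Matrix.mul_smul]
  exact exp_transpose_mul_mul _ _

end FinCorner

section Conjugation

variable {ι 𝕜 : Type*} [Fintype ι] [DecidableEq ι] [RCLike 𝕜]

def expUnit (A : Matrix ι ι 𝕜) : (Matrix ι ι 𝕜)ˣ where
  val := NormedSpace.exp A
  inv := NormedSpace.exp (-A)
  val_inv := by
    rw [← Matrix.exp_add_of_commute _ _ (Commute.refl A).neg_right, add_neg_cancel,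
      NormedSpace.exp_zero]
  inv_val := by
    rw [← Matrix.exp_add_of_commute _ _ (Commute.refl A).neg_left, neg_add_cancel,
      NormedSpace.exp_zero]

theorem expUnit_conj (u : (Matrix ι ι 𝕜)ˣ) (A : Matrix ι ι 𝕜) :
    expUnit ((u : Matrix ι ι 𝕜) * A * (↑u⁻¹ : Matrix ι ι 𝕜)) = u * expUnit A * u⁻¹ :=
  Units.ext (Matrix.exp_units_conj u A)

variable {R : Type*} [CommRing R]

def conjPair (g : (Matrix ι ι R)ˣ) (p : Matrix ι ι R × (ι → R)) : Matrix ι ι R × (ι → R) :=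
  ((g : Matrix ι ι R) * p.1 * (↑g⁻¹ : Matrix ι ι R), (g : Matrix ι ι R) *ᵥ p.2)

theorem conjPair_mul (g h : (Matrix ι ι R)ˣ) (p : Matrix ι ι R × (ι → R)) :
    conjPair (g * h) p = conjPair g (conjPair h p) := by
  simp [conjPair, Matrix.mul_assoc, mulVec_mulVec]

theorem conjPair_one (p : Matrix ι ι R × (ι → R)) : conjPair 1 p = p := by
  simp [conjPair]

end Conjugation

theorem krylov_conjPair {n : ℕ} (g : (Matrix (Fin n) (Fin n) ℂ)ˣ)
    (p : Matrix (Fin n) (Fin n) ℂ × (Fin n → ℂ)) :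
    krylov (conjPair g p).1 (conjPair g p).2 =
      (g : Matrix (Fin n) (Fin n) ℂ) * krylov p.1 p.2 := by
  ext i j
  have hpow : (conjPair g p).1 ^ (j : ℕ) * (g : Matrix (Fin n) (Fin n) ℂ) = g * p.1 ^ (j : ℕ) := by
    rw [conjPair, Units.conj_pow, Units.inv_mul_cancel_right]
  change ((conjPair g p).1 ^ (j : ℕ) *ᵥ ((g : Matrix (Fin n) (Fin n) ℂ) *ᵥ p.2)) i = _
  rw [mulVec_mulVec, hpow, ← mulVec_mulVec]
  rfl

theorem conjPair_mem_Vn {n : ℕ} (g : (Matrix (Fin n) (Fin n) ℂ)ˣ)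
    {p : Matrix (Fin n) (Fin n) ℂ × (Fin n → ℂ)} (hp : p ∈ Vn n) : conjPair g p ∈ Vn n := by
  change IsUnit (krylov _ _)
  rw [krylov_conjPair]
  exact g.isUnit.mul hp

section GelfandZeitlin

variable {n m m' : ℕ}

def gzUnit (hm : m ≤ n) (i : ℕ) (z : ℂ) (C : Matrix (Fin m) (Fin m) ℂ) :
    (Matrix (Fin n) (Fin n) ℂ)ˣ :=
  Units.map (upperLeftExtend hm) (expUnit (z • C ^ (i - 1)))

theorem gzFlowV_eq_conjPair (m i : ℕ) (hm : m ≤ n) (z : ℂ)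
    (p : Matrix (Fin n) (Fin n) ℂ × (Fin n → ℂ)) :
    gzFlowV m i hm z p = conjPair (gzUnit hm i z (ulMinor m hm p.1)) p := by
  simp only [gzFlowV, conjPair, gzUnit, exp_smul_iotaEmb hm]
  simp [expUnit, neg_smul]

theorem gzUnit_neg (hm : m ≤ n) (i : ℕ) (z : ℂ) (C : Matrix (Fin m) (Fin m) ℂ) :
    gzUnit hm i (-z) C = (gzUnit hm i z C)⁻¹ :=
  Units.ext (by simp [gzUnit, expUnit, neg_smul])

theorem map_gzUnit (hmm' : m ≤ m') (hm' : m' ≤ n) (i : ℕ) (z : ℂ)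
    (C : Matrix (Fin m) (Fin m) ℂ) :
    Units.map (upperLeftExtend hm') (gzUnit hmm' i z C) = gzUnit (hmm'.trans hm') i z C :=
  Units.ext (upperLeftExtend_upperLeftExtend hmm' hm' _)

theorem gzUnit_conj (hm : m ≤ n) (i : ℕ) (z : ℂ) (u : (Matrix (Fin m) (Fin m) ℂ)ˣ)
    (C : Matrix (Fin m) (Fin m) ℂ) :
    gzUnit hm i z ((u : Matrix (Fin m) (Fin m) ℂ) * C * (↑u⁻¹ : Matrix (Fin m) (Fin m) ℂ)) =
      Units.map (upperLeftExtend hm) u * gzUnit hm i z C *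
        (Units.map (upperLeftExtend hm) u)⁻¹ := by
  have hsmul : z • ((u : Matrix (Fin m) (Fin m) ℂ) * C ^ (i - 1) *
        (↑u⁻¹ : Matrix (Fin m) (Fin m) ℂ)) =
      u * (z • C ^ (i - 1)) * (↑u⁻¹ : Matrix (Fin m) (Fin m) ℂ) := by
    rw [Matrix.mul_smul, Matrix.smul_mul]
  rw [gzUnit, Units.conj_pow, hsmul, expUnit_conj, map_mul, map_mul, map_inv]
  rfl

theorem ulMinor_conjPair_map (hm : m ≤ n) (u : (Matrix (Fin m) (Fin m) ℂ)ˣ)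
    (p : Matrix (Fin n) (Fin n) ℂ × (Fin n → ℂ)) :
    ulMinor m hm (conjPair (Units.map (upperLeftExtend hm) u) p).1 =
      (u : Matrix (Fin m) (Fin m) ℂ) * ulMinor m hm p.1 * (↑u⁻¹ : Matrix (Fin m) (Fin m) ℂ) :=
  ulMinor_upperLeftExtend_mul_mul hm _ _ _

theorem ulMinor_conjPair_gzUnit_of_le (hmm' : m ≤ m') (hm : m ≤ n) (hm' : m' ≤ n) (i' : ℕ)
    (w : ℂ) (p : Matrix (Fin n) (Fin n) ℂ × (Fin n → ℂ)) :
    ulMinor m hm (conjPair (gzUnit hm' i' w (ulMinor m' hm' p.1)) p).1 = ulMinor m hm p.1 := by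
  have hcomm : Commute (ulMinor m' hm' p.1) (expUnit (w • ulMinor m' hm' p.1 ^ (i' - 1))) :=
    (((Commute.refl _).pow_right _).smul_right w).exp_right
  have hC : ulMinor m' hm' (conjPair (gzUnit hm' i' w (ulMinor m' hm' p.1)) p).1 =
      ulMinor m' hm' p.1 := by
    rw [gzUnit, ulMinor_conjPair_map, ← hcomm.eq, Units.mul_inv_cancel_right]
  rw [← ulMinor_ulMinor hmm' hm', hC, ulMinor_ulMinor]

theorem gzFlowV_comm_of_le (hmm' : m ≤ m') (i i' : ℕ) (hm : m ≤ n) (hm' : m' ≤ n) (z w : ℂ)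
    (p : Matrix (Fin n) (Fin n) ℂ × (Fin n → ℂ)) :
    gzFlowV m i hm z (gzFlowV m' i' hm' w p) = gzFlowV m' i' hm' w (gzFlowV m i hm z p) := by
  set g := gzUnit hm i z (ulMinor m hm p.1)
  set h := gzUnit hm' i' w (ulMinor m' hm' p.1)
  have hg : g = Units.map (upperLeftExtend hm') (gzUnit hmm' i z (ulMinor m hm p.1)) :=
    (map_gzUnit hmm' hm' i z _).symm
  have hgh : gzUnit hm' i' w (ulMinor m' hm' (conjPair g p).1) = g * h * g⁻¹ := by
    rw [hg, ulMinor_conjPair_map, gzUnit_conj]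
  rw [gzFlowV_eq_conjPair m' i' hm' w p, gzFlowV_eq_conjPair m i hm z,
    ulMinor_conjPair_gzUnit_of_le hmm' hm hm', gzFlowV_eq_conjPair m i hm z p,
    gzFlowV_eq_conjPair m' i' hm' w, hgh, ← conjPair_mul, ← conjPair_mul, inv_mul_cancel_right]

theorem gzFlowV_neg_gzFlowV (m i : ℕ) (hm : m ≤ n) (z : ℂ)
    (p : Matrix (Fin n) (Fin n) ℂ × (Fin n → ℂ)) :
    gzFlowV m i hm (-z) (gzFlowV m i hm z p) = p := by
  rw [gzFlowV_eq_conjPair m i hm z, gzFlowV_eq_conjPair,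
    ulMinor_conjPair_gzUnit_of_le le_rfl hm hm, gzUnit_neg, ← conjPair_mul, inv_mul_cancel,
    conjPair_one]

theorem gzFlowV_mapsTo_Vn (m i : ℕ) (hm : m ≤ n) (z : ℂ) :
    Set.MapsTo (gzFlowV m i hm z) (Vn n) (Vn n) := fun p hp =>
  gzFlowV_eq_conjPair m i hm z p ▸ conjPair_mem_Vn _ hp

theorem gzFlowV_bijOn_Vn (m i : ℕ) (hm : m ≤ n) (z : ℂ) :
    Set.BijOn (gzFlowV m i hm z) (Vn n) (Vn n) := by
  have hinv : Set.InvOn (gzFlowV m i hm (-z)) (gzFlowV m i hm z) (Vn n) (Vn n) :=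
    ⟨fun p _ => gzFlowV_neg_gzFlowV m i hm z p,
      fun p _ => by simpa using gzFlowV_neg_gzFlowV m i hm (-z) p⟩
  exact hinv.bijOn (gzFlowV_mapsTo_Vn m i hm z) (gzFlowV_mapsTo_Vn m i hm (-z))

end GelfandZeitlin

theorem gz_flows_on_Vn_general (n : ℕ) :
    (∀ (m i m' i' : ℕ), 1 ≤ i → i ≤ m → ∀ hm : m ≤ n, 1 ≤ i' → i' ≤ m' → ∀ hm' : m' ≤ n,
      ∀ (z w : ℂ) (p : Matrix (Fin n) (Fin n) ℂ × (Fin n → ℂ)),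
        gzFlowV m i hm z (gzFlowV m' i' hm' w p) =
          gzFlowV m' i' hm' w (gzFlowV m i hm z p)) ∧
    (∀ (m i : ℕ), 1 ≤ i → i ≤ m → ∀ hm : m ≤ n, ∀ z : ℂ,
      Set.BijOn (gzFlowV m i hm z) (Vn n) (Vn n)) := by
  refine ⟨fun m i m' i' _ _ hm _ _ hm' z w p => ?_,
    fun m i _ _ hm z => gzFlowV_bijOn_Vn m i hm z⟩
  rcases le_total m m' with hmm' | hm'm
  · exact gzFlowV_comm_of_le hmm' i i' hm hm' z w p
  · exact (gzFlowV_comm_of_le hm'm i' i hm' hm w z p).symm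

/-- The Gelfand–Zeitlin flows `ψ_{m,i}` on `Matₙ(ℂ) × ℂⁿ` pairwise commute and each of
them maps `V_n` bijectively onto `V_n`. -/
theorem gz_flows_on_Vn (n : ℕ) (hn : 1 ≤ n) :
    (∀ (m i m' i' : ℕ), 1 ≤ i → i ≤ m → ∀ hm : m ≤ n, 1 ≤ i' → i' ≤ m' → ∀ hm' : m' ≤ n,
      ∀ (z w : ℂ) (p : Matrix (Fin n) (Fin n) ℂ × (Fin n → ℂ)),
        gzFlowV m i hm z (gzFlowV m' i' hm' w p) =
          gzFlowV m' i' hm' w (gzFlowV m i hm z p)) ∧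
    (∀ (m i : ℕ), 1 ≤ i → i ≤ m → ∀ hm : m ≤ n, ∀ z : ℂ,
      Set.BijOn (gzFlowV m i hm z) (Vn n) (Vn n)) :=
  gz_flows_on_Vn_general n
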